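/- Variance-peak lower bound for the Marchenko-Pastur integral at ratio α = 1: there is a constant c > 0 such that for all large ξ, ξ² ∫ t (1 + ξ t)^{-2} dμ_1(t) ≥ c · ξ^{1/2}, where μ_1 is the Marchenko-Pastur distribution with ratio parameter 1 (supported on [0,4] with density √((4−t)/t)/(2π)). -/

import Mathlib

/-! At `α = 1` the factor `t` in the integrand cancels the `1/t` of the density, leaving
`(2π)⁻¹ ∫₀⁴ √((4-t)t) (1+ξt)⁻² dt`. On the window `[1/ξ, 2/ξ]` the integrand is at least
`√(2/ξ)/9` and the window has length `1/ξ`, so the integral is `≳ ξ^{-3/2}`, i.e. `ξ²` times it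
is `≳ √ξ`. -/

open MeasureTheory Real Filter

/-- The Marchenko–Pastur distribution with ratio parameter `α`:
`μ_α = max(0, 1−1/α) δ₀ + (√((α₊−t)(t−α₋))/(2παt)) 1_{[α₋,α₊]}(t) dt`, `α_± = (1±√α)²`. -/
noncomputable def mpMeasure (α : ℝ) : Measure ℝ :=
  ENNReal.ofReal (max 0 (1 - 1 / α)) • Measure.dirac 0 +
    volume.withDensity fun t => ENNReal.ofReal
      ((Set.Icc ((1 - Real.sqrt α) ^ 2) ((1 + Real.sqrt α) ^ 2)).indicator
        (fun s => Real.sqrt (((1 + Real.sqrt α) ^ 2 - s) * (s - (1 - Real.sqrt α) ^ 2)) /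
          (2 * π * α * s)) t)

open Set

theorem integral_withDensity_ofReal_indicator {X : Type*} [MeasurableSpace X] {μ : Measure X}
    {s : Set X} (hs : MeasurableSet s) {ρ : X → ℝ} (hρ : Measurable ρ) (hρ0 : ∀ x ∈ s, 0 ≤ ρ x)
    (g : X → ℝ) :
    ∫ x, g x ∂μ.withDensity (fun x => ENNReal.ofReal (s.indicator ρ x)) =
      ∫ x in s, ρ x * g x ∂μ := by
  rw [integral_withDensity_eq_integral_toReal_smul (hρ.indicator hs).ennreal_ofReal
    (ae_of_all _ fun _ => ENNReal.ofReal_lt_top), ← integral_indicator hs]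
  congr 1 with x
  by_cases hx : x ∈ s
  · simp [hx, hρ0 x hx]
  · simp [hx]

theorem mpMeasure_one : mpMeasure 1 = volume.withDensity fun t => ENNReal.ofReal
    ((Icc (0 : ℝ) 4).indicator (fun s => √((4 - s) * s) / (2 * π * s)) t) := by
  simp only [mpMeasure, sqrt_one]
  norm_num

theorem integral_mul_mpMeasure_one (f : ℝ → ℝ) :
    ∫ t, t * f t ∂mpMeasure 1 = (2 * π)⁻¹ * ∫ t in Icc (0 : ℝ) 4, √((4 - t) * t) * f t := by
  rw [mpMeasure_one, integral_withDensity_ofReal_indicator measurableSet_Icc (by fun_prop)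
    (fun s hs => by have := hs.1; positivity), ← integral_const_mul]
  refine setIntegral_congr_fun measurableSet_Icc fun t ht => ?_
  rcases ht.1.eq_or_lt with rfl | ht0
  · simp
  · field_simp

theorem integrableOn_sqrt_mul_inv_sq (ξ : ℝ) (hξ : 0 ≤ ξ) :
    IntegrableOn (fun t => √((4 - t) * t) * ((1 + ξ * t) ^ 2)⁻¹) (Icc 0 4) := by
  refine ContinuousOn.integrableOn_Icc ?_
  refine (by fun_prop : Continuous fun t : ℝ => √((4 - t) * t)).continuousOn.mul
    (ContinuousOn.inv₀ (by fun_prop) fun t ht => ?_)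
  have := ht.1
  positivity

theorem sqrt_div_le_sqrt_mul_inv_sq {ξ t : ℝ} (hξ : 1 ≤ ξ) (ht : t ∈ Icc (1 / ξ) (2 / ξ)) :
    √(2 / ξ) / 9 ≤ √((4 - t) * t) * ((1 + ξ * t) ^ 2)⁻¹ := by
  have hξ0 : 0 < ξ := one_pos.trans_le hξ
  have hξt₁ : 1 ≤ ξ * t := by rw [← div_le_iff₀' hξ0]; exact ht.1
  have hξt₂ : ξ * t ≤ 2 := by rw [← le_div_iff₀' hξ0]; exact ht.2
  have ht2 : t ≤ 2 := by nlinarith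
  rw [div_eq_mul_inv]
  gcongr
  · rw [div_le_iff₀ hξ0]; nlinarith
  · nlinarith

theorem sqrt_div_le_integral_sqrt_mul_inv_sq {ξ : ℝ} (hξ : 1 ≤ ξ) :
    √(2 / ξ) / (9 * ξ) ≤ ∫ t in Icc (0 : ℝ) 4, √((4 - t) * t) * ((1 + ξ * t) ^ 2)⁻¹ := by
  have hξ0 : 0 < ξ := one_pos.trans_le hξ
  have hwindow : Icc (1 / ξ) (2 / ξ) ⊆ Icc 0 4 :=
    Icc_subset_Icc (by positivity) (by rw [div_le_iff₀ hξ0]; linarith)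
  have hint := integrableOn_sqrt_mul_inv_sq ξ hξ0.le
  calc √(2 / ξ) / (9 * ξ) = √(2 / ξ) / 9 * volume.real (Icc (1 / ξ) (2 / ξ)) := by
        rw [volume_real_Icc_of_le (by gcongr; norm_num)]; field_simp; ring
    _ ≤ ∫ t in Icc (1 / ξ) (2 / ξ), √((4 - t) * t) * ((1 + ξ * t) ^ 2)⁻¹ :=
        setIntegral_ge_of_const_le_real measurableSet_Icc measure_Icc_lt_top.ne
          (fun t ht => sqrt_div_le_sqrt_mul_inv_sq hξ ht) (hint.mono_set hwindow)
    _ ≤ _ := setIntegral_mono_set hint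
        (ae_restrict_of_forall_mem measurableSet_Icc fun _ _ => by positivity)
        hwindow.eventuallyLE

/-- Variance-peak lower bound at ratio `α = 1`: there is `c > 0` such that for all large `ξ`,
`ξ² ∫ t (1+ξt)^{-2} dμ₁(t) ≥ c ξ^{1/2}`. -/
theorem mp_variance_peak_lower_bound :
    ∃ c : ℝ, 0 < c ∧ ∀ᶠ ξ in atTop,
      c * Real.sqrt ξ ≤ ξ ^ 2 * ∫ t, t * ((1 + ξ * t) ^ 2)⁻¹ ∂(mpMeasure 1) := by
  refine ⟨√2 / (18 * π), by positivity, ?_⟩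
  filter_upwards [eventually_ge_atTop (1 : ℝ)] with ξ hξ
  have hξ0 : 0 < ξ := one_pos.trans_le hξ
  rw [integral_mul_mpMeasure_one]
  calc √2 / (18 * π) * √ξ = ξ ^ 2 * ((2 * π)⁻¹ * (√(2 / ξ) / (9 * ξ))) := by
        rw [sqrt_div' _ hξ0.le]
        field_simp
        rw [sq_sqrt hξ0.le]; ring
    _ ≤ _ := by gcongr; exact sqrt_div_le_integral_sqrt_mul_inv_sq hξ
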